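/- Let A ⊆ B be a unital C*-inclusion, E : B → A a conditional expectation, and x ∈ B a self-adjoint element with ‖x‖ < 1 that commutes with every element of A. Then 1 − x is a positive invertible element of B, 1 − E(x) is a positive invertible element of A lying in the center of A, and the map θ : B → A defined by θ(t) = E((1 − x)^{1/2} t (1 − x)^{1/2}) · (1 − E(x))^{−1} (where (1 − x)^{1/2} is the positive square root given by the continuous functional calculus) is again a conditional expectation for A ⊆ B. -/

import Mathlib

/-!
Since `‖x‖ < 1`, we have `(1 - ‖x‖) • 1 ≤ 1 - x`, and the positive unital map `E` preserves this
bound, so both `1 - x` and `1 - E x` are strictly positive. Bimodularity turns the commutation of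
`x` with `A` into centrality of `E x` in `A`, and `s = √(1 - x)` commutes with `A` as well. Then
`θ(t) = E(s t s) c` with the central element `c = (E (s * s))⁻¹ ∈ A` fixes `A` because
`θ(a) = a E(s * s) c = a`, and it is completely positive because it is `E` conjugated on both
sides by diagonal matrices.
-/

open Matrix in
/-- A conditional expectation for a unital C*-inclusion `A ⊆ B`: a bounded linear map
`E : B → B` taking values in `A`, restricting to the identity on `A`, `A`-bimodular, and
completely positive (positive matrices over `B` are sent to positive matrices). -/
structure IsCondExp {B : Type*} [CStarAlgebra B]
    (A : StarSubalgebra ℂ B) (E : B → B) : Prop where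
  boundedLinear : IsBoundedLinearMap ℂ E
  mem_of : ∀ x : B, E x ∈ A
  fixes : ∀ a ∈ A, E a = a
  bimodular : ∀ (x : B), ∀ a ∈ A, ∀ b ∈ A, E (a * x * b) = a * E x * b
  completelyPositive : ∀ (n : ℕ) (M : Matrix (Fin n) (Fin n) B),
    (∃ N : Matrix (Fin n) (Fin n) B, M = Nᴴ * N) →
      ∃ P : Matrix (Fin n) (Fin n) B, M.map E = Pᴴ * P

open Matrix

lemma Commute.ringInverse_left {M₀ : Type*} [MonoidWithZero M₀] {a b : M₀} (h : Commute a b) :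
    Commute (Ring.inverse a) b := by
  by_cases ha : IsUnit a
  · lift a to M₀ˣ using ha
    rw [Ring.inverse_unit]
    exact h.units_inv_left
  · rw [Ring.inverse_non_unit a ha]
    exact Commute.zero_left b

lemma StarSubalgebra.ringInverse_mem {B : Type*} [CStarAlgebra B] (S : StarSubalgebra ℂ B)
    [IsClosed (S : Set B)] {a : B} (ha : a ∈ S) : Ring.inverse a ∈ S := by
  by_cases hu : IsUnit a
  · obtain ⟨u, hu⟩ := (S.coe_isUnit (a := ⟨a, ha⟩)).mp hu
    have ha_eq : a = ((Units.map S.subtype.toMonoidHom u : Bˣ) : B) := by simp [hu]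
    rw [ha_eq, Ring.inverse_unit, Units.coe_map_inv]
    exact SetLike.coe_mem _
  · rw [Ring.inverse_non_unit a hu]
    exact zero_mem S

lemma Commute.cfcSqrt_left {B : Type*} [CStarAlgebra B] [PartialOrder B] [StarOrderedRing B]
    {a b : B} (h : Commute a b) : Commute (CFC.sqrt a) b :=
  CFC.sqrt_eq_cfc (a := a) ▸ h.cfc_nnreal NNReal.sqrt

lemma Matrix.diagonal_mul_conjTranspose_mul_self_mul_diagonal {R n : Type*} [Semiring R]
    [StarRing R] [Fintype n] [DecidableEq n] {s : R} (hs : IsSelfAdjoint s) (N : Matrix n n R) :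
    diagonal (fun _ => s) * (Nᴴ * N) * diagonal (fun _ => s) =
      (N * diagonal fun _ => s)ᴴ * (N * diagonal fun _ => s) := by
  have hstar : (star fun _ : n => s) = fun _ => s := funext fun _ => hs.star_eq
  rw [conjTranspose_mul, diagonal_conjTranspose, hstar]
  simp only [Matrix.mul_assoc]

namespace IsCondExp

variable {B : Type*} [CStarAlgebra B] {A : StarSubalgebra ℂ B} {E : B → B}

lemma map_sub (hE : IsCondExp A E) (x y : B) : E (x - y) = E x - E y :=
  hE.boundedLinear.toIsLinearMap.map_sub x y

lemma map_one (hE : IsCondExp A E) : E 1 = 1 :=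
  hE.fixes 1 (one_mem A)

lemma map_algebraMap (hE : IsCondExp A E) (r : ℝ) : E (algebraMap ℝ B r) = algebraMap ℝ B r :=
  hE.fixes _ (by rw [IsScalarTower.algebraMap_apply ℝ ℂ B]; exact A.algebraMap_mem _)

lemma map_mul_left (hE : IsCondExp A E) {a : B} (ha : a ∈ A) (x : B) : E (a * x) = a * E x := by
  simpa using hE.bimodular x a ha 1 (one_mem A)

lemma map_mul_right (hE : IsCondExp A E) {a : B} (ha : a ∈ A) (x : B) : E (x * a) = E x * a := by
  simpa using hE.bimodular x 1 (one_mem A) a ha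

lemma commute_map (hE : IsCondExp A E) {x : B} (hx : ∀ a ∈ A, Commute x a) :
    ∀ a ∈ A, Commute (E x) a := fun a ha => by
  rw [commute_iff_eq, ← hE.map_mul_right ha, ← hE.map_mul_left ha, hx a ha]

variable [PartialOrder B] [StarOrderedRing B]

lemma nonneg (hE : IsCondExp A E) {y : B} (hy : 0 ≤ y) : 0 ≤ E y := by
  obtain ⟨b, rfl⟩ := CStarAlgebra.nonneg_iff_eq_star_mul_self.mp hy
  obtain ⟨P, hP⟩ := hE.completelyPositive 1 (of fun _ _ => star b * b)
    ⟨of fun _ _ => b, by ext; simp [mul_apply]⟩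
  have hP00 := congrFun (congrFun hP 0) 0
  simp only [map_apply, of_apply, mul_apply, conjTranspose_apply, Fin.sum_univ_one] at hP00
  exact hP00 ▸ star_mul_self_nonneg _

lemma monotone (hE : IsCondExp A E) : Monotone E := fun y z h =>
  sub_nonneg.mp (hE.map_sub z y ▸ hE.nonneg (sub_nonneg.mpr h))

-- `[E (s Mᵢⱼ s) c]` is `E` applied to `diag s · M · diag s`, then conjugated by `diag √c`.
lemma completelyPositive_conj_mul (hE : IsCondExp A E) {s c : B} (hs : IsSelfAdjoint s)
    (hc : 0 ≤ c) (hEc : ∀ t, Commute (E t) c) (n : ℕ) (M : Matrix (Fin n) (Fin n) B)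
    (hM : ∃ N : Matrix (Fin n) (Fin n) B, M = Nᴴ * N) :
    ∃ P : Matrix (Fin n) (Fin n) B, M.map (fun t => E (s * t * s) * c) = Pᴴ * P := by
  obtain ⟨N, rfl⟩ := hM
  obtain ⟨Q, hQ⟩ := hE.completelyPositive n _
    ⟨_, diagonal_mul_conjTranspose_mul_self_mul_diagonal hs N⟩
  set r := CFC.sqrt c
  have hr : IsSelfAdjoint r := .of_nonneg (CFC.sqrt_nonneg c)
  refine ⟨Q * diagonal fun _ => r, ?_⟩
  rw [← diagonal_mul_conjTranspose_mul_self_mul_diagonal hr, ← hQ]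
  ext i j
  have hentry : (diagonal (fun _ => s) * (Nᴴ * N) * diagonal (fun _ => s) :
      Matrix (Fin n) (Fin n) B) i j = s * (Nᴴ * N) i j * s := by
    rw [mul_diagonal, diagonal_mul]
  have hEr : Commute (E (s * (Nᴴ * N) i j * s)) r := ((hEc _).symm.cfcSqrt_left).symm
  rw [map_apply, mul_diagonal, diagonal_mul, map_apply, hentry, ← CFC.sqrt_mul_sqrt_self c hc,
    ← mul_assoc, hEr.eq]

theorem conj_mul_ringInverse [IsClosed (A : Set B)] (hE : IsCondExp A E) {s : B}
    (hs : IsSelfAdjoint s) (hsA : ∀ a ∈ A, Commute s a) (hu : IsUnit (E (s * s))) :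
    IsCondExp A (fun t => E (s * t * s) * Ring.inverse (E (s * s))) := by
  set c := Ring.inverse (E (s * s))
  have hcA : c ∈ A := A.ringInverse_mem (hE.mem_of _)
  have hc_central : ∀ a ∈ A, Commute c a := fun a ha =>
    (hE.commute_map (fun b hb => (hsA b hb).mul_left (hsA b hb)) a ha) |>.ringInverse_left
  have hc : 0 ≤ c := (hu.isStrictlyPositive (hE.nonneg hs.mul_self_nonneg)).ringInverse.nonneg
  refine
    { boundedLinear := ?_
      mem_of := fun t => mul_mem (hE.mem_of _) hcA
      fixes := fun a ha => ?_
      bimodular := fun t a ha b hb => ?_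
      completelyPositive := hE.completelyPositive_conj_mul hs hc
        fun t => (hc_central _ (hE.mem_of t)).symm }
  · exact ((ContinuousLinearMap.mul ℂ B).flip c).isBoundedLinearMap.comp
      (hE.boundedLinear.comp (ContinuousLinearMap.mulLeftRight ℂ B s s).isBoundedLinearMap)
  · rw [(hsA a ha).eq, mul_assoc, hE.map_mul_left ha, mul_assoc, Ring.mul_inverse_cancel _ hu,
      mul_one]
  · have hsab : s * (a * t * b) * s = a * (s * t * s) * b := by
      simp only [← mul_assoc, (hsA a ha).eq]
      rw [mul_assoc (a * s * t), ← (hsA b hb).eq, ← mul_assoc]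
    rw [hsab, hE.bimodular _ a ha b hb, mul_assoc _ b c, ← (hc_central b hb).eq]
    simp only [mul_assoc]

end IsCondExp

/-- Given a conditional expectation `E` for a unital C*-inclusion `A ⊆ B` and a self-adjoint
`x ∈ B` with `‖x‖ < 1` commuting with every element of `A`: `1 - x` is positive and invertible
in `B`, `1 - E x` is positive and invertible and lies in the center of `A`, and
`θ : t ↦ E (√(1-x) * t * √(1-x)) * (1 - E x)⁻¹` is again a conditional expectation. -/
theorem condExp_perturbation_is_condExp
    {B : Type*} [CStarAlgebra B] [PartialOrder B] [StarOrderedRing B]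
    (A : StarSubalgebra ℂ B) (hA : IsClosed (A : Set B))
    (E : B → B) (hE : IsCondExp A E)
    (x : B) (hx_sa : IsSelfAdjoint x) (hx_norm : ‖x‖ < 1)
    (hx_comm : ∀ a ∈ A, x * a = a * x) :
    (0 ≤ 1 - x ∧ IsUnit (1 - x)) ∧
    (0 ≤ 1 - E x ∧ IsUnit (1 - E x) ∧ (1 - E x) ∈ A ∧
      ∀ b ∈ A, (1 - E x) * b = b * (1 - E x)) ∧
    IsCondExp A (fun t : B =>
      E (CFC.sqrt (1 - x) * t * CFC.sqrt (1 - x)) * Ring.inverse (1 - E x)) := by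
  have hε : IsStrictlyPositive (algebraMap ℝ B (1 - ‖x‖)) :=
    isStrictlyPositive_algebraMap (sub_pos.mpr hx_norm)
  have hx_le : algebraMap ℝ B (1 - ‖x‖) ≤ 1 - x := by
    rw [map_sub, map_one]
    exact sub_le_sub_left hx_sa.le_algebraMap_norm_self 1
  have hEx_le : algebraMap ℝ B (1 - ‖x‖) ≤ 1 - E x := by
    simpa only [hE.map_algebraMap, hE.map_sub, hE.map_one] using hE.monotone hx_le
  have h1x := hε.of_le hx_le
  have h1Ex := hε.of_le hEx_le
  have hsqrt := CFC.sqrt_mul_sqrt_self (1 - x) h1x.nonneg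
  have hθ := hE.conj_mul_ringInverse (A := A) (s := CFC.sqrt (1 - x))
    (.of_nonneg (CFC.sqrt_nonneg _))
    (fun a ha => ((Commute.one_left a).sub_left (hx_comm a ha)).cfcSqrt_left)
    (by rw [hsqrt, hE.map_sub, hE.map_one]; exact h1Ex.isUnit)
  rw [hsqrt, hE.map_sub, hE.map_one] at hθ
  exact ⟨⟨h1x.nonneg, h1x.isUnit⟩, ⟨h1Ex.nonneg, h1Ex.isUnit, sub_mem (one_mem A) (hE.mem_of x),
    fun b hb => (Commute.one_left b).sub_left (hE.commute_map hx_comm b hb)⟩, hθ⟩
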